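/- arXiv:1105.5938 — 3 statements merged into one kernel-verified Lean document; each statement's English description precedes it below -/
import Mathlib

section
/- Let f : [a,b] → ℝ be bounded. Then the indefinite lower Darboux integral F_*(x) = lower∫_a^x f(y) dy and the indefinite upper Darboux integral F^*(x) = upper∫_a^x f(y) dy are generalized primitives of f; in particular every bounded function on [a,b] has a generalized primitive. -/
noncomputable section

/-- A partition of `[a, b]` given by points `x 0 = a < x 1 < ⋯ < x n = b`. -/
def IsPartition (a b : ℝ) (n : ℕ) (x : ℕ → ℝ) : Prop :=
  x 0 = a ∧ x n = b ∧ ∀ i < n, x i < x (i + 1)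

/-- The lower Darboux sum of `f` associated to the partition points `x 0, …, x n`. -/
noncomputable def lowerSum (f : ℝ → ℝ) (n : ℕ) (x : ℕ → ℝ) : ℝ :=
  ∑ i ∈ Finset.range n, sInf (f '' Set.Icc (x i) (x (i + 1))) * (x (i + 1) - x i)

/-- The upper Darboux sum of `f` associated to the partition points `x 0, …, x n`. -/
noncomputable def upperSum (f : ℝ → ℝ) (n : ℕ) (x : ℕ → ℝ) : ℝ :=
  ∑ i ∈ Finset.range n, sSup (f '' Set.Icc (x i) (x (i + 1))) * (x (i + 1) - x i)

/-- The lower Darboux integral of `f` over `[a, b]`: the supremum of the lower sums. -/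
noncomputable def lowerDarboux (f : ℝ → ℝ) (a b : ℝ) : ℝ :=
  sSup {s : ℝ | ∃ n x, IsPartition a b n x ∧ s = lowerSum f n x}

/-- The upper Darboux integral of `f` over `[a, b]`: the infimum of the upper sums. -/
noncomputable def upperDarboux (f : ℝ → ℝ) (a b : ℝ) : ℝ :=
  sInf {s : ℝ | ∃ n x, IsPartition a b n x ∧ s = upperSum f n x}

/-- `f` is bounded on the set `s`. -/
def BoundedOn (f : ℝ → ℝ) (s : Set ℝ) : Prop := ∃ M : ℝ, ∀ x ∈ s, |f x| ≤ M

/-- `f` is Riemann integrable on `[a, b]`: it is bounded there and its lower and upper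
Darboux integrals coincide. -/
def RiemannIntegrableOn (f : ℝ → ℝ) (a b : ℝ) : Prop :=
  BoundedOn f (Set.Icc a b) ∧ lowerDarboux f a b = upperDarboux f a b

/-- The oriented Riemann integral `∫_u^v f`: for `u ≤ v` it is the (lower) Darboux integral
over `[u, v]` (equal to the upper one when `f` is Riemann integrable, and `0` when `u = v`),
and for `v < u` it is minus the integral over `[v, u]`. -/
noncomputable def riemannIntegral (f : ℝ → ℝ) (u v : ℝ) : ℝ :=
  if u ≤ v then lowerDarboux f u v else -lowerDarboux f v u

/-- `F` is a generalized primitive of `f` on `[a, b]`: for all `x < y` in `[a, b]`,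
`inf_{[x,y]} f ≤ (F y - F x)/(y - x) ≤ sup_{[x,y]} f`. -/
def IsGenPrimitive (a b : ℝ) (f F : ℝ → ℝ) : Prop :=
  ∀ x ∈ Set.Icc a b, ∀ y ∈ Set.Icc a b, x < y →
    sInf (f '' Set.Icc x y) ≤ (F y - F x) / (y - x) ∧
      (F y - F x) / (y - x) ≤ sSup (f '' Set.Icc x y)

/-! Extending a partition of `[a, x]` by the single interval `[x, y]` gives the lower bound
`F_*(x) + (inf_{[x,y]} f) (y - x) ≤ F_*(y)`. For the upper bound, induct on the number of
intervals of a partition of `[a, y]`: if its last interval `[y', y]` starts beyond `x`, apply the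
induction hypothesis on `[a, y']`; otherwise bound the lower sum on `[a, y']` by `F_*(y')` and
use the lower bound on `[y', x]`. The upper integral is `-(lower integral of -f)`. -/

open Set Function

variable {f : ℝ → ℝ} {s t : Set ℝ} {a b u v w x : ℝ} {n : ℕ} {z : ℕ → ℝ}

namespace BoundedOn

theorem mono (hf : BoundedOn f t) (hst : s ⊆ t) : BoundedOn f s :=
  let ⟨M, hM⟩ := hf
  ⟨M, fun x hx => hM x (hst hx)⟩

theorem bddBelow_image (hf : BoundedOn f s) : BddBelow (f '' s) :=
  let ⟨M, hM⟩ := hf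
  ⟨-M, forall_mem_image.2 fun x hx => (abs_le.1 (hM x hx)).1⟩

theorem bddAbove_image (hf : BoundedOn f s) : BddAbove (f '' s) :=
  let ⟨M, hM⟩ := hf
  ⟨M, forall_mem_image.2 fun x hx => (abs_le.1 (hM x hx)).2⟩

theorem neg (hf : BoundedOn f s) : BoundedOn (fun t => -f t) s :=
  let ⟨M, hM⟩ := hf
  ⟨M, fun x hx => (abs_neg (f x)).trans_le (hM x hx)⟩

end BoundedOn

theorem isPartition_self (u : ℝ) : IsPartition u u 0 fun _ => u :=
  ⟨rfl, rfl, fun i hi => absurd hi i.not_lt_zero⟩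

theorem update_add_one_apply_of_le {i : ℕ} (hi : i ≤ n) : update z (n + 1) w i = z i :=
  update_of_ne (by omega) _ _

namespace IsPartition

theorem succ_iff :
    IsPartition u w (n + 1) z ↔ IsPartition u (z n) n z ∧ z n < w ∧ z (n + 1) = w := by
  constructor
  · rintro ⟨h0, hw, hlt⟩
    exact ⟨⟨h0, rfl, fun i hi => hlt i (by omega)⟩, hw ▸ hlt n n.lt_succ_self, hw⟩
  · rintro ⟨⟨h0, -, hlt⟩, hn, hw⟩
    refine ⟨h0, hw, fun i hi => ?_⟩
    rcases Nat.lt_succ_iff_lt_or_eq.1 hi with hi | rfl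
    · exact hlt i hi
    · exact hw ▸ hn

theorem le (h : IsPartition u v n z) : u ≤ v := by
  induction n generalizing v with
  | zero => exact h.1.symm.trans_le h.2.1.le
  | succ n ih =>
    obtain ⟨hP, hlt, -⟩ := succ_iff.1 h
    exact (ih hP).trans hlt.le

theorem update_succ (h : IsPartition u v n z) (hvw : v < w) :
    IsPartition u w (n + 1) (update z (n + 1) w) := by
  obtain ⟨h0, hv, hlt⟩ := h
  refine succ_iff.2 ⟨⟨(update_add_one_apply_of_le n.zero_le).trans h0, rfl, fun i hi => ?_⟩, ?_,
    update_self _ _ _⟩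
  · rw [update_add_one_apply_of_le hi.le, update_add_one_apply_of_le hi]
    exact hlt i hi
  · rw [update_add_one_apply_of_le le_rfl, hv]
    exact hvw

theorem exists_of_le (huv : u ≤ v) : ∃ n z, IsPartition u v n z := by
  rcases huv.eq_or_lt with rfl | huv
  · exact ⟨0, _, isPartition_self u⟩
  · exact ⟨1, _, (isPartition_self u).update_succ huv⟩

end IsPartition

theorem lowerSum_zero : lowerSum f 0 z = 0 :=
  Finset.sum_range_zero _

theorem lowerSum_succ :
    lowerSum f (n + 1) z =
      lowerSum f n z + sInf (f '' Icc (z n) (z (n + 1))) * (z (n + 1) - z n) :=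
  Finset.sum_range_succ _ _

theorem lowerSum_update_succ :
    lowerSum f (n + 1) (update z (n + 1) w) =
      lowerSum f n z + sInf (f '' Icc (z n) w) * (w - z n) := by
  rw [lowerSum_succ, update_self, update_add_one_apply_of_le le_rfl]
  congr 1
  refine Finset.sum_congr rfl fun i hi => ?_
  have hi := Finset.mem_range.1 hi
  rw [update_add_one_apply_of_le hi.le, update_add_one_apply_of_le hi]

theorem lowerSum_le_mul {M : ℝ} (hb : BddBelow (f '' Icc u v)) (hM : ∀ t ∈ Icc u v, f t ≤ M)
    (h : IsPartition u v n z) : lowerSum f n z ≤ M * (v - u) := by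
  induction n generalizing v with
  | zero =>
    rw [lowerSum_zero, ← h.1, ← h.2.1, sub_self, mul_zero]
  | succ n ih =>
    obtain ⟨hP, hlt, hw⟩ := IsPartition.succ_iff.1 h
    have hsub : Icc (z n) v ⊆ Icc u v := Icc_subset_Icc_left hP.le
    have hlast : sInf (f '' Icc (z n) v) ≤ M :=
      (csInf_le (hb.mono (image_mono hsub)) (mem_image_of_mem f ⟨le_rfl, hlt.le⟩)).trans
        (hM _ (hsub ⟨le_rfl, hlt.le⟩))
    have hinit := ih (hb.mono (image_mono (Icc_subset_Icc_right hlt.le)))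
      (fun t ht => hM t (Icc_subset_Icc_right hlt.le ht)) hP
    rw [lowerSum_succ, hw]
    linarith [mul_le_mul_of_nonneg_right hlast (sub_nonneg.2 hlt.le)]

theorem lowerSum_le_lowerDarboux (hf : BoundedOn f (Icc u v)) (h : IsPartition u v n z) :
    lowerSum f n z ≤ lowerDarboux f u v := by
  have hb := hf.bddBelow_image
  obtain ⟨M, hM⟩ := hf
  refine le_csSup ⟨M * (v - u), ?_⟩ ⟨n, z, h, rfl⟩
  rintro _ ⟨m, y, hy, rfl⟩
  exact lowerSum_le_mul hb (fun t ht => (abs_le.1 (hM t ht)).2) hy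

theorem lowerDarboux_le_of_forall_lowerSum_le (huv : u ≤ v) {c : ℝ}
    (H : ∀ n z, IsPartition u v n z → lowerSum f n z ≤ c) : lowerDarboux f u v ≤ c := by
  obtain ⟨n, z, h⟩ := IsPartition.exists_of_le huv
  refine csSup_le ⟨_, n, z, h, rfl⟩ ?_
  rintro _ ⟨m, y, hy, rfl⟩
  exact H m y hy

theorem lowerDarboux_add_sInf_mul_le (hf : BoundedOn f (Icc u w)) (huv : u ≤ v) (hvw : v < w) :
    lowerDarboux f u v + sInf (f '' Icc v w) * (w - v) ≤ lowerDarboux f u w := by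
  rw [← le_sub_iff_add_le]
  refine lowerDarboux_le_of_forall_lowerSum_le huv fun n z h => le_sub_iff_add_le.2 ?_
  have := lowerSum_le_lowerDarboux hf (h.update_succ hvw)
  rwa [lowerSum_update_succ, h.2.1] at this

theorem lowerSum_le_lowerDarboux_add_sSup_mul (hf : BoundedOn f (Icc u w))
    (h : IsPartition u w n z) (hux : u ≤ x) (hxw : x ≤ w) :
    lowerSum f n z ≤ lowerDarboux f u x + sSup (f '' Icc x w) * (w - x) := by
  induction n generalizing w x with
  | zero =>
    obtain rfl : u = w := h.1.symm.trans h.2.1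
    obtain rfl : x = u := le_antisymm hxw hux
    simpa using lowerSum_le_lowerDarboux hf h
  | succ n ih =>
    obtain ⟨hP, hlt, hw⟩ := IsPartition.succ_iff.1 h
    have huy := hP.le
    have hfuy := hf.mono (Icc_subset_Icc_right hlt.le)
    have hbelow := (hf.mono (Icc_subset_Icc_left huy)).bddBelow_image
    have habove := (hf.mono (Icc_subset_Icc_left hux)).bddAbove_image
    have hinf_le_sup : sInf (f '' Icc (z n) w) ≤ sSup (f '' Icc x w) :=
      (csInf_le hbelow (mem_image_of_mem f ⟨le_max_left _ x, max_le hlt.le hxw⟩)).trans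
        (le_csSup habove (mem_image_of_mem f ⟨le_max_right _ _, max_le hlt.le hxw⟩))
    rw [lowerSum_succ, hw]
    rcases le_or_gt x (z n) with hxy | hyx
    · have hinit := ih hfuy hP hux hxy
      have hsup : sSup (f '' Icc x (z n)) ≤ sSup (f '' Icc x w) :=
        csSup_le_csSup habove ((nonempty_Icc.2 hxy).image f)
          (image_mono (Icc_subset_Icc_right hlt.le))
      linarith [mul_le_mul_of_nonneg_right hsup (sub_nonneg.2 hxy),
        mul_le_mul_of_nonneg_right hinf_le_sup (sub_nonneg.2 hlt.le)]
    · have hinit := lowerSum_le_lowerDarboux hfuy hP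
      have hext := lowerDarboux_add_sInf_mul_le (hf.mono (Icc_subset_Icc_right hxw)) huy hyx
      have hinf : sInf (f '' Icc (z n) w) ≤ sInf (f '' Icc (z n) x) :=
        csInf_le_csInf hbelow ((nonempty_Icc.2 hyx.le).image f)
          (image_mono (Icc_subset_Icc_right hxw))
      linarith [mul_le_mul_of_nonneg_right hinf (sub_nonneg.2 hyx.le),
        mul_le_mul_of_nonneg_right hinf_le_sup (sub_nonneg.2 hxw)]

theorem lowerDarboux_le_add_sSup_mul (hf : BoundedOn f (Icc u w)) (hux : u ≤ x) (hxw : x ≤ w) :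
    lowerDarboux f u w ≤ lowerDarboux f u x + sSup (f '' Icc x w) * (w - x) :=
  lowerDarboux_le_of_forall_lowerSum_le (hux.trans hxw) fun _ _ h =>
    lowerSum_le_lowerDarboux_add_sSup_mul hf h hux hxw

theorem isGenPrimitive_lowerDarboux (hf : BoundedOn f (Icc a b)) :
    IsGenPrimitive a b f fun x => lowerDarboux f a x := by
  intro x hx y hy hxy
  have hfy : BoundedOn f (Icc a y) := hf.mono (Icc_subset_Icc_right hy.2)
  rw [le_div_iff₀ (sub_pos.2 hxy), div_le_iff₀ (sub_pos.2 hxy)]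
  constructor
  · linarith [lowerDarboux_add_sInf_mul_le hfy hx.1 hxy]
  · linarith [lowerDarboux_le_add_sSup_mul hfy hx.1 hxy.le]

theorem image_neg_comp (f : ℝ → ℝ) (s : Set ℝ) : (fun t => -f t) '' s = -(f '' s) := by
  rw [← image_neg_eq_neg, image_image]

theorem upperSum_eq_neg_lowerSum_neg : upperSum f n z = -lowerSum (fun t => -f t) n z := by
  simp only [upperSum, lowerSum, image_neg_comp, Real.sInf_neg, neg_mul, Finset.sum_neg_distrib,
    neg_neg]

theorem upperDarboux_eq_neg_lowerDarboux_neg :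
    upperDarboux f u v = -lowerDarboux (fun t => -f t) u v := by
  have hsets : {s | ∃ n x, IsPartition u v n x ∧ s = upperSum f n x} =
      -{s | ∃ n x, IsPartition u v n x ∧ s = lowerSum (fun t => -f t) n x} := by
    ext s
    simp only [mem_ofPred_eq, mem_neg, upperSum_eq_neg_lowerSum_neg, neg_eq_iff_eq_neg]
  rw [upperDarboux, lowerDarboux, hsets, Real.sInf_neg]

theorem IsGenPrimitive.neg {F : ℝ → ℝ} (hF : IsGenPrimitive a b f F) :
    IsGenPrimitive a b (fun t => -f t) fun t => -F t := by
  intro x hx y hy hxy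
  obtain ⟨hinf, hsup⟩ := hF x hx y hy hxy
  have hslope : (-F y - -F x) / (y - x) = -((F y - F x) / (y - x)) := by ring
  rw [image_neg_comp, Real.sInf_neg, Real.sSup_neg, hslope]
  exact ⟨neg_le_neg hsup, neg_le_neg hinf⟩

theorem isGenPrimitive_upperDarboux (hf : BoundedOn f (Icc a b)) :
    IsGenPrimitive a b f fun x => upperDarboux f a x := by
  simpa only [upperDarboux_eq_neg_lowerDarboux_neg, neg_neg] using
    (isGenPrimitive_lowerDarboux hf.neg).neg

theorem lower_upper_darboux_genPrimitive_general (a b : ℝ) (f : ℝ → ℝ)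
    (hf : BoundedOn f (Set.Icc a b)) :
    IsGenPrimitive a b f (fun x => lowerDarboux f a x) ∧
      IsGenPrimitive a b f (fun x => upperDarboux f a x) ∧
      ∃ F : ℝ → ℝ, IsGenPrimitive a b f F :=
  ⟨isGenPrimitive_lowerDarboux hf, isGenPrimitive_upperDarboux hf, _,
    isGenPrimitive_lowerDarboux hf⟩

/-- The indefinite lower and upper Darboux integrals of a bounded function `f` are
generalized primitives of `f`; in particular every bounded function on `[a, b]`
has a generalized primitive. -/
theorem lower_upper_darboux_genPrimitive (a b : ℝ) (hab : a ≤ b) (f : ℝ → ℝ)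
    (hf : BoundedOn f (Set.Icc a b)) :
    IsGenPrimitive a b f (fun x => lowerDarboux f a x) ∧
      IsGenPrimitive a b f (fun x => upperDarboux f a x) ∧
      ∃ F : ℝ → ℝ, IsGenPrimitive a b f F :=
  lower_upper_darboux_genPrimitive_general a b f hf
end
end

section
/- Let f : [a,b] → ℝ be bounded and let F be a generalized primitive of f. Then for every x ∈ [a,b) the right Dini derivatives of F at x satisfy min{f(x), liminf_{y→x⁺} f(y)} ≤ D₊F(x) ≤ D⁺F(x) ≤ max{f(x), limsup_{y→x⁺} f(y)}, and for every x ∈ (a,b] the left Dini derivatives satisfy min{f(x), liminf_{y→x⁻} f(y)} ≤ D₋F(x) ≤ D⁻F(x) ≤ max{f(x), limsup_{y→x⁻} f(y)}. -/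
noncomputable section

/-- The upper right Dini derivative `D⁺F(x) = limsup_{y→x⁺} (F y - F x)/(y - x)`,
with values in the extended reals. -/
noncomputable def DiniUpperRight (F : ℝ → ℝ) (x : ℝ) : EReal :=
  Filter.limsup (fun y => (((F y - F x) / (y - x) : ℝ) : EReal)) (nhdsWithin x (Set.Ioi x))

/-- The lower right Dini derivative `D₊F(x) = liminf_{y→x⁺} (F y - F x)/(y - x)`. -/
noncomputable def DiniLowerRight (F : ℝ → ℝ) (x : ℝ) : EReal :=
  Filter.liminf (fun y => (((F y - F x) / (y - x) : ℝ) : EReal)) (nhdsWithin x (Set.Ioi x))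

/-- The upper left Dini derivative `D⁻F(x) = limsup_{y→x⁻} (F y - F x)/(y - x)`. -/
noncomputable def DiniUpperLeft (F : ℝ → ℝ) (x : ℝ) : EReal :=
  Filter.limsup (fun y => (((F y - F x) / (y - x) : ℝ) : EReal)) (nhdsWithin x (Set.Iio x))

/-- The lower left Dini derivative `D₋F(x) = liminf_{y→x⁻} (F y - F x)/(y - x)`. -/
noncomputable def DiniLowerLeft (F : ℝ → ℝ) (x : ℝ) : EReal :=
  Filter.liminf (fun y => (((F y - F x) / (y - x) : ℝ) : EReal)) (nhdsWithin x (Set.Iio x))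

/-! If `c` exceeds both `f x` and the one-sided `limsup` of `f` at `x`, then `f ≤ c` on every
short segment from `x` to the relevant side, so the slopes `(F y - F x) / (y - x)` are eventually
at most `c`. The lower bounds are the upper bounds for `-F`, a generalized primitive of `-f`. -/

open Filter Set Topology

section OneSided

variable {α : Type*} [LinearOrder α] [TopologicalSpace α] [OrderTopology α] {x : α} {p : α → Prop}

theorem eventually_forall_uIcc_nhdsGT [NoMaxOrder α] (h : ∀ᶠ y in 𝓝[>] x, p y) :
    ∀ᶠ y in 𝓝[>] x, ∀ z ∈ uIcc x y, z ≠ x → p z := by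
  obtain ⟨u, hxu, hu⟩ := mem_nhdsGT_iff_exists_Ioo_subset.1 h
  filter_upwards [Ioo_mem_nhdsGT hxu] with y hy z hz hzx
  rw [uIcc_of_lt hy.1] at hz
  exact hu ⟨hz.1.lt_of_ne' hzx, hz.2.trans_lt hy.2⟩

theorem eventually_forall_uIcc_nhdsLT [NoMinOrder α] (h : ∀ᶠ y in 𝓝[<] x, p y) :
    ∀ᶠ y in 𝓝[<] x, ∀ z ∈ uIcc x y, z ≠ x → p z := by
  obtain ⟨l, hlx, hl⟩ := mem_nhdsLT_iff_exists_Ioo_subset.1 h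
  filter_upwards [Ioo_mem_nhdsLT hlx] with y hy z hz hzx
  rw [uIcc_of_gt hy.2] at hz
  exact hl ⟨hy.1.trans_le hz.1, hz.2.lt_of_ne hzx⟩

end OneSided

namespace IsGenPrimitive

variable {a b : ℝ} {f F : ℝ → ℝ}

theorem neg_s4 (hF : IsGenPrimitive a b f F) : IsGenPrimitive a b (-f) (-F) := by
  intro x hx y hy hxy
  have hf : (-f) '' Icc x y = -(f '' Icc x y) := by
    rw [Pi.neg_def, ← image_neg_eq_neg, image_image]
  have hq : ((-F) y - (-F) x) / (y - x) = -((F y - F x) / (y - x)) := by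
    simp only [Pi.neg_apply]; ring
  rw [hf, hq, Real.sInf_neg, Real.sSup_neg, neg_le_neg_iff, neg_le_neg_iff]
  exact (hF x hx y hy hxy).symm

theorem slope_le {x y c : ℝ} (hF : IsGenPrimitive a b f F) (hx : x ∈ Icc a b) (hy : y ∈ Icc a b)
    (hxy : x ≠ y) (hc : ∀ z ∈ uIcc x y, f z ≤ c) : (F y - F x) / (y - x) ≤ c := by
  rcases hxy.lt_or_gt with hxy | hyx
  · rw [uIcc_of_lt hxy] at hc
    exact (hF x hx y hy hxy).2.trans
      (csSup_le ((nonempty_Icc.2 hxy.le).image f) (forall_mem_image.2 hc))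
  · rw [uIcc_of_gt hyx] at hc
    rw [← neg_div_neg_eq, neg_sub, neg_sub]
    exact (hF y hy x hx hyx).2.trans
      (csSup_le ((nonempty_Icc.2 hyx.le).image f) (forall_mem_image.2 hc))

variable {x : ℝ} {l : Filter ℝ}

theorem limsup_slope_le (hF : IsGenPrimitive a b f F) (hx : x ∈ Icc a b)
    (hl : ∀ᶠ y in l, y ∈ Icc a b ∧ y ≠ x)
    (hseg : ∀ {p : ℝ → Prop}, (∀ᶠ y in l, p y) → ∀ᶠ y in l, ∀ z ∈ uIcc x y, z ≠ x → p z) :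
    limsup (fun y => (((F y - F x) / (y - x) : ℝ) : EReal)) l ≤
      max (f x : EReal) (limsup (fun y => (f y : EReal)) l) := by
  refine EReal.le_of_forall_lt_iff_le.1 fun c hc => ?_
  have hfx : f x ≤ c := EReal.coe_le_coe_iff.1 (le_max_left _ _ |>.trans hc.le)
  have hlt : ∀ᶠ y in l, (f y : EReal) < c :=
    eventually_lt_of_limsup_lt (le_max_right _ _ |>.trans_lt hc)
  refine limsup_le_of_le (by isBoundedDefault) ?_
  filter_upwards [hl, hseg hlt] with y ⟨hy, hyx⟩ hseg_y
  refine EReal.coe_le_coe_iff.2 (hF.slope_le hx hy hyx.symm fun z hz => ?_)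
  rcases eq_or_ne z x with rfl | hzx
  · exact hfx
  · exact (EReal.coe_lt_coe_iff.1 (hseg_y z hz hzx)).le

theorem min_le_liminf_slope (hF : IsGenPrimitive a b f F) (hx : x ∈ Icc a b)
    (hl : ∀ᶠ y in l, y ∈ Icc a b ∧ y ≠ x)
    (hseg : ∀ {p : ℝ → Prop}, (∀ᶠ y in l, p y) → ∀ᶠ y in l, ∀ z ∈ uIcc x y, z ≠ x → p z) :
    min (f x : EReal) (liminf (fun y => (f y : EReal)) l) ≤
      liminf (fun y => (((F y - F x) / (y - x) : ℝ) : EReal)) l := by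
  have h := hF.neg_s4.limsup_slope_le hx hl hseg
  have hq : (fun y => ((((-F) y - (-F) x) / (y - x) : ℝ) : EReal)) =
      -fun y => (((F y - F x) / (y - x) : ℝ) : EReal) := by
    ext y; simp only [Pi.neg_apply, ← EReal.coe_neg]; congr 1; ring
  have hf : (fun y => (((-f) y : ℝ) : EReal)) = -fun y => (f y : EReal) := by
    ext y; simp only [Pi.neg_apply, EReal.coe_neg]
  rwa [hq, hf, EReal.limsup_neg, EReal.limsup_neg, Pi.neg_apply, EReal.coe_neg,
    EReal.max_neg_neg, EReal.neg_le_neg_iff] at h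

end IsGenPrimitive

theorem genPrimitive_dini_bounds_general (a b : ℝ) (f F : ℝ → ℝ)
    (hF : IsGenPrimitive a b f F) :
    (∀ x ∈ Set.Ico a b,
      min ((f x : EReal))
          (Filter.liminf (fun y => ((f y : ℝ) : EReal)) (nhdsWithin x (Set.Ioi x))) ≤
        DiniLowerRight F x ∧
      DiniLowerRight F x ≤ DiniUpperRight F x ∧
      DiniUpperRight F x ≤
        max ((f x : EReal))
          (Filter.limsup (fun y => ((f y : ℝ) : EReal)) (nhdsWithin x (Set.Ioi x)))) ∧
    (∀ x ∈ Set.Ioc a b,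
      min ((f x : EReal))
          (Filter.liminf (fun y => ((f y : ℝ) : EReal)) (nhdsWithin x (Set.Iio x))) ≤
        DiniLowerLeft F x ∧
      DiniLowerLeft F x ≤ DiniUpperLeft F x ∧
      DiniUpperLeft F x ≤
        max ((f x : EReal))
          (Filter.limsup (fun y => ((f y : ℝ) : EReal)) (nhdsWithin x (Set.Iio x)))) := by
  refine ⟨fun x hx => ?_, fun x hx => ?_⟩
  · have hl : ∀ᶠ y in 𝓝[>] x, y ∈ Icc a b ∧ y ≠ x := by
      filter_upwards [Ioo_mem_nhdsGT hx.2] with y hy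
      exact ⟨⟨hx.1.trans hy.1.le, hy.2.le⟩, hy.1.ne'⟩
    exact ⟨hF.min_le_liminf_slope (Ico_subset_Icc_self hx) hl eventually_forall_uIcc_nhdsGT,
      liminf_le_limsup,
      hF.limsup_slope_le (Ico_subset_Icc_self hx) hl eventually_forall_uIcc_nhdsGT⟩
  · have hl : ∀ᶠ y in 𝓝[<] x, y ∈ Icc a b ∧ y ≠ x := by
      filter_upwards [Ioo_mem_nhdsLT hx.1] with y hy
      exact ⟨⟨hy.1.le, hy.2.le.trans hx.2⟩, hy.2.ne⟩
    exact ⟨hF.min_le_liminf_slope (Ioc_subset_Icc_self hx) hl eventually_forall_uIcc_nhdsLT,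
      liminf_le_limsup,
      hF.limsup_slope_le (Ioc_subset_Icc_self hx) hl eventually_forall_uIcc_nhdsLT⟩

/-- Dini derivative bounds for a generalized primitive `F` of a bounded function `f`:
for `x ∈ [a, b)`,
`min {f x, liminf_{y→x⁺} f y} ≤ D₊F(x) ≤ D⁺F(x) ≤ max {f x, limsup_{y→x⁺} f y}`,
and the analogous left-hand inequalities hold for `x ∈ (a, b]`. -/
theorem genPrimitive_dini_bounds (a b : ℝ) (f F : ℝ → ℝ)
    (hf : ∃ M : ℝ, ∀ x ∈ Set.Icc a b, |f x| ≤ M)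
    (hF : IsGenPrimitive a b f F) :
    (∀ x ∈ Set.Ico a b,
      min ((f x : EReal))
          (Filter.liminf (fun y => ((f y : ℝ) : EReal)) (nhdsWithin x (Set.Ioi x))) ≤
        DiniLowerRight F x ∧
      DiniLowerRight F x ≤ DiniUpperRight F x ∧
      DiniUpperRight F x ≤
        max ((f x : EReal))
          (Filter.limsup (fun y => ((f y : ℝ) : EReal)) (nhdsWithin x (Set.Ioi x)))) ∧
    (∀ x ∈ Set.Ioc a b,
      min ((f x : EReal))
          (Filter.liminf (fun y => ((f y : ℝ) : EReal)) (nhdsWithin x (Set.Iio x))) ≤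
        DiniLowerLeft F x ∧
      DiniLowerLeft F x ≤ DiniUpperLeft F x ∧
      DiniUpperLeft F x ≤
        max ((f x : EReal))
          (Filter.limsup (fun y => ((f y : ℝ) : EReal)) (nhdsWithin x (Set.Iio x)))) :=
  genPrimitive_dini_bounds_general a b f F hF
end
end

section
/- Let f : [a,b] → ℝ be Riemann integrable on [a,b] and let F be a generalized primitive of f. Then F'(x) = f(x) for almost every x ∈ [a,b] (with respect to Lebesgue measure). -/
noncomputable section

/-!
At a point `t` where `f` is continuous within `[a, b]`, the bounds
`inf_{[s,t]} f ≤ slope F s t ≤ sup_{[s,t]} f` squeeze the difference quotients of `F` to `f t`.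
So it suffices that a Riemann integrable `f` is continuous almost everywhere. Given `ε, η > 0`,
pick partitions `P`, `Q` with `U(f, Q) - L(f, P) < ε η`. The upper step function of `Q` minus
the lower step function of `P` is nonnegative with integral `U(f, Q) - L(f, P)`, and away from
the partition points it is at least `ε` wherever `f` jumps by `ε` arbitrarily close by; Markov's
inequality bounds the measure of that set by `η`.
-/

open MeasureTheory Set Filter Topology

def stepFunction (n : ℕ) (x c : ℕ → ℝ) (t : ℝ) : ℝ :=
  ∑ i ∈ Finset.range n, (Ico (x i) (x (i + 1))).indicator (fun _ => c i) t

section stepFunction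

variable {n : ℕ} {x c : ℕ → ℝ} {t : ℝ}

theorem integrable_stepFunction : Integrable (stepFunction n x c) :=
  integrable_finsetSum _ fun _ _ =>
    (integrableOn_const measure_Ico_lt_top.ne).integrable_indicator measurableSet_Ico

theorem integral_stepFunction (hx : ∀ i < n, x i ≤ x (i + 1)) :
    ∫ t, stepFunction n x c t = ∑ i ∈ Finset.range n, c i * (x (i + 1) - x i) := by
  simp only [stepFunction]
  rw [integral_finsetSum _ fun _ _ =>
    (integrableOn_const measure_Ico_lt_top.ne).integrable_indicator measurableSet_Ico]
  refine Finset.sum_congr rfl fun i hi => ?_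
  rw [integral_indicator_const _ measurableSet_Ico,
    Real.volume_real_Ico_of_le (hx i (Finset.mem_range.1 hi)), smul_eq_mul, mul_comm]

theorem stepFunction_eq_zero (hx : MonotoneOn x (Iic n)) (ht : t ∉ Ico (x 0) (x n)) :
    stepFunction n x c t = 0 := by
  refine Finset.sum_eq_zero fun i hi => indicator_of_notMem (fun hti => ht ?_) _
  have hi := Finset.mem_range.1 hi
  exact ⟨(hx (by simp) (by simp; omega) (Nat.zero_le i)).trans hti.1,
    hti.2.trans_le (hx (by simp; omega) (by simp) hi)⟩

theorem stepFunction_eq (hx : MonotoneOn x (Iic n)) {i : ℕ} (hi : i < n)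
    (ht : t ∈ Ico (x i) (x (i + 1))) : stepFunction n x c t = c i := by
  rw [stepFunction, Finset.sum_eq_single_of_mem i (Finset.mem_range.2 hi), indicator_of_mem ht]
  intro k hk hki
  refine indicator_of_notMem (fun htk => ?_) _
  have hk := Finset.mem_range.1 hk
  rcases lt_or_gt_of_ne hki with h | h
  · exact (htk.2.trans_le (hx (by simp; omega) (by simp; omega) h)).not_ge ht.1
  · exact (ht.2.trans_le (hx (by simp; omega) (by simp; omega) h)).not_ge htk.1

end stepFunction

theorem exists_mem_Ico_succ {α : Type*} [LinearOrder α] {n : ℕ} {x : ℕ → α} {t : α}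
    (ht : t ∈ Ico (x 0) (x n)) : ∃ i < n, t ∈ Ico (x i) (x (i + 1)) := by
  classical
  have hex : ∃ k, t < x k := ⟨n, ht.2⟩
  have hk0 : Nat.find hex ≠ 0 := fun h => (h ▸ Nat.find_spec hex).not_ge ht.1
  refine ⟨Nat.find hex - 1, by have := Nat.find_min' hex ht.2; omega, ?_, ?_⟩
  · exact not_lt.1 (Nat.find_min hex (by omega))
  · rw [Nat.sub_add_cancel (Nat.pos_of_ne_zero hk0)]; exact Nat.find_spec hex

def lowerStep (f : ℝ → ℝ) (n : ℕ) (x : ℕ → ℝ) : ℝ → ℝ :=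
  stepFunction n x fun i => sInf (f '' Icc (x i) (x (i + 1)))

def upperStep (f : ℝ → ℝ) (n : ℕ) (x : ℕ → ℝ) : ℝ → ℝ :=
  stepFunction n x fun i => sSup (f '' Icc (x i) (x (i + 1)))

theorem BoundedOn.bddAbove_image_s14 {f : ℝ → ℝ} {s : Set ℝ} (h : BoundedOn f s) :
    BddAbove (f '' s) :=
  let ⟨M, hM⟩ := h; ⟨M, forall_mem_image.2 fun x hx => (le_abs_self _).trans (hM x hx)⟩

theorem BoundedOn.bddBelow_image_s14 {f : ℝ → ℝ} {s : Set ℝ} (h : BoundedOn f s) :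
    BddBelow (f '' s) :=
  let ⟨M, hM⟩ := h; ⟨-M, forall_mem_image.2 fun x hx => neg_le_of_abs_le (hM x hx)⟩

namespace IsPartition

variable {a b : ℝ} {n : ℕ} {x : ℕ → ℝ} {f : ℝ → ℝ}

theorem strictMonoOn (hx : IsPartition a b n x) : StrictMonoOn x (Iic n) :=
  strictMonoOn_Iic_of_lt_succ fun i hi => by simpa using hx.2.2 i hi

theorem Icc_subset (hx : IsPartition a b n x) {i : ℕ} (hi : i < n) :
    Icc (x i) (x (i + 1)) ⊆ Icc a b := by
  rw [← hx.1, ← hx.2.1]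
  exact Icc_subset_Icc (hx.strictMonoOn.monotoneOn (by simp) (by simp; omega) (Nat.zero_le i))
    (hx.strictMonoOn.monotoneOn (by simp; omega) (by simp) hi)

theorem stepFunction_eq_zero (hx : IsPartition a b n x) {c : ℕ → ℝ} {t : ℝ} (ht : t ∉ Ico a b) :
    stepFunction n x c t = 0 :=
  _root_.stepFunction_eq_zero hx.strictMonoOn.monotoneOn (by rwa [hx.1, hx.2.1])

theorem integral_lowerStep (hx : IsPartition a b n x) :
    ∫ t, lowerStep f n x t = lowerSum f n x :=
  integral_stepFunction fun i hi => (hx.2.2 i hi).le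

theorem integral_upperStep (hx : IsPartition a b n x) :
    ∫ t, upperStep f n x t = upperSum f n x :=
  integral_stepFunction fun i hi => (hx.2.2 i hi).le

end IsPartition

theorem RiemannIntegrableOn.exists_upperSum_sub_lowerSum_lt {f : ℝ → ℝ} {a b η : ℝ}
    (hf : RiemannIntegrableOn f a b) (hab : a < b) (hη : 0 < η) :
    ∃ n x m y, IsPartition a b n x ∧ IsPartition a b m y ∧
      upperSum f m y - lowerSum f n x < η := by
  have hP : IsPartition a b 1 fun i => if i = 0 then a else b :=
    ⟨rfl, rfl, fun i hi => by simpa [Nat.lt_one_iff.1 hi] using hab⟩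
  have hL : lowerDarboux f a b - η / 2 <
      sSup {s | ∃ n x, IsPartition a b n x ∧ s = lowerSum f n x} :=
    sub_lt_self _ (half_pos hη)
  have hU : sInf {s | ∃ n x, IsPartition a b n x ∧ s = upperSum f n x} <
      upperDarboux f a b + η / 2 :=
    lt_add_of_pos_right _ (half_pos hη)
  obtain ⟨_, ⟨n, x, hx, rfl⟩, hL⟩ := exists_lt_of_lt_csSup (by exact ⟨_, 1, _, hP, rfl⟩) hL
  obtain ⟨_, ⟨m, y, hy, rfl⟩, hU⟩ := exists_lt_of_csInf_lt (by exact ⟨_, 1, _, hP, rfl⟩) hU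
  exact ⟨n, x, m, y, hx, hy, by linarith [hf.2]⟩

def jumpSet (f : ℝ → ℝ) (s : Set ℝ) (ε : ℝ) : Set ℝ :=
  {t ∈ s | ∀ δ > 0, ∃ x ∈ s, dist x t < δ ∧ ε ≤ dist (f x) (f t)}

theorem continuousWithinAt_of_forall_notMem_jumpSet {f : ℝ → ℝ} {s : Set ℝ} {t : ℝ}
    (ht : t ∈ s) (h : ∀ k : ℕ, t ∉ jumpSet f s (1 / (k + 1))) : ContinuousWithinAt f s t := by
  refine Metric.continuousWithinAt_iff.2 fun ε hε => ?_
  obtain ⟨k, hk⟩ := exists_nat_one_div_lt hε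
  have := h k
  simp only [jumpSet, mem_ofPred_eq, ht, true_and, not_forall, not_exists, not_and, not_le] at this
  obtain ⟨δ, hδ, hδk⟩ := this
  exact ⟨δ, hδ, fun {x} hx hxt => (hδk x hx hxt).trans hk⟩

section Partitions

variable {f : ℝ → ℝ} {a b : ℝ} {n m : ℕ} {x y : ℕ → ℝ}

theorem exists_common_cell (hf : BoundedOn f (Icc a b)) (hx : IsPartition a b n x)
    (hy : IsPartition a b m y) {t : ℝ} (ht : t ∈ Ico a b) :
    ∃ i < n, ∃ j < m, t ∈ Ico (x i) (x (i + 1)) ∧ t ∈ Ico (y j) (y (j + 1)) ∧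
      ∀ s ∈ Icc (x i) (x (i + 1)) ∩ Icc (y j) (y (j + 1)),
        ∀ s' ∈ Icc (x i) (x (i + 1)) ∩ Icc (y j) (y (j + 1)),
          f s - f s' ≤ upperStep f m y t - lowerStep f n x t := by
  obtain ⟨i, hi, hti⟩ := exists_mem_Ico_succ (by rwa [hx.1, hx.2.1] : t ∈ Ico (x 0) (x n))
  obtain ⟨j, hj, htj⟩ := exists_mem_Ico_succ (by rwa [hy.1, hy.2.1] : t ∈ Ico (y 0) (y m))
  refine ⟨i, hi, j, hj, hti, htj, fun s hs s' hs' => ?_⟩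
  rw [upperStep, lowerStep, stepFunction_eq hy.strictMonoOn.monotoneOn hj htj,
    stepFunction_eq hx.strictMonoOn.monotoneOn hi hti]
  exact sub_le_sub
    (le_csSup (hf.bddAbove_image_s14.mono (image_mono (hy.Icc_subset hj))) (mem_image_of_mem f hs.2))
    (csInf_le (hf.bddBelow_image_s14.mono (image_mono (hx.Icc_subset hi))) (mem_image_of_mem f hs'.1))

theorem lowerStep_le_upperStep (hf : BoundedOn f (Icc a b)) (hx : IsPartition a b n x)
    (hy : IsPartition a b m y) (t : ℝ) : lowerStep f n x t ≤ upperStep f m y t := by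
  by_cases ht : t ∈ Ico a b
  · obtain ⟨i, -, j, -, hti, htj, hosc⟩ := exists_common_cell hf hx hy ht
    have htt : t ∈ Icc (x i) (x (i + 1)) ∩ Icc (y j) (y (j + 1)) :=
      ⟨Ico_subset_Icc_self hti, Ico_subset_Icc_self htj⟩
    linarith [hosc t htt t htt]
  · rw [lowerStep, upperStep, hx.stepFunction_eq_zero ht, hy.stepFunction_eq_zero ht]

theorem le_upperStep_sub_lowerStep (hf : BoundedOn f (Icc a b)) (hx : IsPartition a b n x)
    (hy : IsPartition a b m y) {ε t : ℝ} (ht : t ∈ jumpSet f (Icc a b) ε \ (range x ∪ range y)) :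
    ε ≤ upperStep f m y t - lowerStep f n x t := by
  obtain ⟨⟨htab, hjump⟩, htxy⟩ := ht
  simp only [mem_union, mem_range, not_or, not_exists] at htxy
  have htb : t ∈ Ico a b := ⟨htab.1, htab.2.lt_of_ne fun h => htxy.1 n (hx.2.1.trans h.symm)⟩
  obtain ⟨i, -, j, -, hti, htj, hosc⟩ := exists_common_cell hf hx hy htb
  have hnhds : Ioo (x i) (x (i + 1)) ∩ Ioo (y j) (y (j + 1)) ∈ 𝓝 t :=
    inter_mem (Ioo_mem_nhds (hti.1.lt_of_ne (htxy.1 i)) hti.2)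
      (Ioo_mem_nhds (htj.1.lt_of_ne (htxy.2 j)) htj.2)
  obtain ⟨δ, hδ, hball⟩ := Metric.mem_nhds_iff.1 hnhds
  obtain ⟨s, -, hsδ, hεs⟩ := hjump δ hδ
  have hs := hball (Metric.mem_ball.2 hsδ)
  have hs' : s ∈ Icc (x i) (x (i + 1)) ∩ Icc (y j) (y (j + 1)) :=
    ⟨Ioo_subset_Icc_self hs.1, Ioo_subset_Icc_self hs.2⟩
  have ht' : t ∈ Icc (x i) (x (i + 1)) ∩ Icc (y j) (y (j + 1)) :=
    ⟨Ico_subset_Icc_self hti, Ico_subset_Icc_self htj⟩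
  rw [Real.dist_eq] at hεs
  exact hεs.trans (abs_sub_le_iff.2 ⟨hosc s hs' t ht', hosc t ht' s hs'⟩)

end Partitions

theorem RiemannIntegrableOn.volume_jumpSet_eq_zero {f : ℝ → ℝ} {a b ε : ℝ}
    (hf : RiemannIntegrableOn f a b) (hab : a < b) (hε : 0 < ε) :
    volume (jumpSet f (Icc a b) ε) = 0 := by
  refine le_antisymm (ENNReal.le_of_forall_pos_le_add fun η hη _ => ?_) zero_le
  obtain ⟨n, x, m, y, hx, hy, hgap⟩ := hf.exists_upperSum_sub_lowerSum_lt hab (mul_pos hε hη)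
  set g := fun t => upperStep f m y t - lowerStep f n x t
  have hU : Integrable (upperStep f m y) := integrable_stepFunction
  have hL : Integrable (lowerStep f n x) := integrable_stepFunction
  have hg_nonneg : 0 ≤ g := fun t => sub_nonneg.2 (lowerStep_le_upperStep hf.1 hx hy t)
  have hg_integral : ∫ t, g t = upperSum f m y - lowerSum f n x := by
    rw [integral_sub hU hL, hx.integral_lowerStep, hy.integral_upperStep]
  have hsub : {t | ε ≤ g t} ⊆ Ico a b := fun t ht => by
    by_contra hout
    simp only [mem_ofPred_eq, g, upperStep, lowerStep, hx.stepFunction_eq_zero hout,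
      hy.stepFunction_eq_zero hout, sub_zero] at ht
    exact ht.not_gt hε
  have hmarkov : volume.real {t | ε ≤ g t} ≤ η := by
    have := mul_meas_ge_le_integral_of_nonneg (Eventually.of_forall hg_nonneg) (hU.sub hL) ε
    rw [hg_integral] at this
    exact le_of_mul_le_mul_left (this.trans hgap.le) hε
  have hnull : volume (range x ∪ range y) = 0 :=
    ((countable_range x).union (countable_range y)).measure_zero _
  calc volume (jumpSet f (Icc a b) ε)
      = volume (jumpSet f (Icc a b) ε \ (range x ∪ range y)) := (measure_sdiff_null hnull).symm
    _ ≤ volume {t | ε ≤ g t} := measure_mono fun t ht => le_upperStep_sub_lowerStep hf.1 hx hy ht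
    _ = ENNReal.ofReal (volume.real {t | ε ≤ g t}) :=
      (ofReal_measureReal ((measure_mono hsub).trans_lt measure_Ico_lt_top).ne).symm
    _ ≤ 0 + η := by rw [zero_add]; exact ENNReal.ofReal_le_of_le_toReal hmarkov

theorem RiemannIntegrableOn.ae_continuousWithinAt {f : ℝ → ℝ} {a b : ℝ}
    (hf : RiemannIntegrableOn f a b) :
    ∀ᵐ t, t ∈ Icc a b → ContinuousWithinAt f (Icc a b) t := by
  rcases lt_or_ge a b with hab | hba
  · have hnull : volume (⋃ k : ℕ, jumpSet f (Icc a b) (1 / (k + 1))) = 0 :=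
      measure_iUnion_null fun k => hf.volume_jumpSet_eq_zero hab Nat.one_div_pos_of_nat
    filter_upwards [measure_eq_zero_iff_ae_notMem.1 hnull] with t ht htab
    exact continuousWithinAt_of_forall_notMem_jumpSet htab fun k hk => ht (mem_iUnion_of_mem k hk)
  · have hnull : volume (Icc a b) = 0 := by simp [hba]
    filter_upwards [measure_eq_zero_iff_ae_notMem.1 hnull] with t ht htab using absurd htab ht

theorem IsGenPrimitive.sInf_le_slope_and_slope_le_sSup {a b : ℝ} {f F : ℝ → ℝ}
    (hF : IsGenPrimitive a b f F) {s t : ℝ} (hs : s ∈ Icc a b) (ht : t ∈ Icc a b) (hst : s ≠ t) :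
    sInf (f '' uIcc s t) ≤ slope F s t ∧ slope F s t ≤ sSup (f '' uIcc s t) := by
  rcases hst.lt_or_gt with h | h
  · rw [uIcc_of_le h.le, slope_def_field]; exact hF s hs t ht h
  · rw [uIcc_of_ge h.le, slope_comm, slope_def_field]; exact hF t ht s hs h

theorem IsGenPrimitive.hasDerivWithinAt {a b : ℝ} {f F : ℝ → ℝ} (hF : IsGenPrimitive a b f F)
    {t : ℝ} (ht : t ∈ Icc a b) (hf : ContinuousWithinAt f (Icc a b) t) :
    HasDerivWithinAt F (f t) (Icc a b) t := by
  rw [hasDerivWithinAt_iff_tendsto_slope, Metric.tendsto_nhdsWithin_nhds]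
  intro ε hε
  obtain ⟨δ, hδ, hfδ⟩ := Metric.continuousWithinAt_iff.1 hf (ε / 2) (half_pos hε)
  refine ⟨δ, hδ, fun s ⟨hs, hst⟩ hsδ => ?_⟩
  have hclose : ∀ z ∈ uIcc t s, dist (f z) (f t) < ε / 2 := fun z hz =>
    hfδ (uIcc_subset_Icc ht hs hz) ((abs_sub_left_of_mem_uIcc hz).trans_lt hsδ)
  have hne : (f '' uIcc t s).Nonempty := nonempty_uIcc.image f
  have hlo : f t - ε / 2 ≤ sInf (f '' uIcc t s) := le_csInf hne <| forall_mem_image.2 fun z hz =>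
    by linarith [(abs_sub_lt_iff.1 (hclose z hz)).2]
  have hhi : sSup (f '' uIcc t s) ≤ f t + ε / 2 := csSup_le hne <| forall_mem_image.2 fun z hz =>
    by linarith [(abs_sub_lt_iff.1 (hclose z hz)).1]
  obtain ⟨hslo, hshi⟩ := hF.sInf_le_slope_and_slope_le_sSup ht hs (Ne.symm hst)
  rw [Real.dist_eq, abs_lt]
  constructor <;> linarith

theorem genPrimitive_deriv_ae_general (a b : ℝ) (f F : ℝ → ℝ)
    (hf : RiemannIntegrableOn f a b) (hF : IsGenPrimitive a b f F) :
    ∀ᵐ x ∂MeasureTheory.volume, x ∈ Set.Icc a b →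
      HasDerivWithinAt F (f x) (Set.Icc a b) x := by
  filter_upwards [hf.ae_continuousWithinAt] with x hcont hx
  exact hF.hasDerivWithinAt hx (hcont hx)

/-- If `f` is Riemann integrable on `[a, b]` and `F` is a generalized primitive of `f`,
then `F' = f` almost everywhere on `[a, b]`. -/
theorem genPrimitive_deriv_ae (a b : ℝ) (hab : a ≤ b) (f F : ℝ → ℝ)
    (hf : RiemannIntegrableOn f a b) (hF : IsGenPrimitive a b f F) :
    ∀ᵐ x ∂MeasureTheory.volume, x ∈ Set.Icc a b →
      HasDerivWithinAt F (f x) (Set.Icc a b) x :=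
  genPrimitive_deriv_ae_general a b f F hf hF
end
end
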